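/- arXiv:2310.10350 — 3 statements merged into one kernel-verified Lean document; each statement's English description precedes it below -/
import Mathlib

section
/- Let ε > 0, let ω : [0,T] → ℝ be C¹ with |ω'(s)| ≤ C̃ for all s, and let η solve ε η'(t) = ω(t) − η(t) with η(0) = η_0. Then for all t ∈ [0,T], |η(t) − ω(t)| ≤ |η_0 − ω(0)| e^{−t/ε} + C̃ ε (1 − e^{−t/ε}). -/
open Set

/-- quantitative relaxation estimate: if `ω` is `C¹` with `|ω'| ≤ C̃` and
`η` solves `ε η' = ω − η`, `η(0) = η₀`, then
`|η(t) − ω(t)| ≤ |η₀ − ω(0)| e^{−t/ε} + C̃ ε (1 − e^{−t/ε})` on `[0,T]`. -/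
theorem relaxation_estimate (T ε η₀ Ctil : ℝ) (hT : 0 ≤ T) (hε : 0 < ε)
    (ω ω' η : ℝ → ℝ)
    (hω' : ∀ s, HasDerivAt ω (ω' s) s)
    (hω'cont : Continuous ω')
    (hω'bdd : ∀ s ∈ Icc 0 T, |ω' s| ≤ Ctil)
    (hinit : η 0 = η₀)
    (hode : ∀ t ∈ Icc 0 T, HasDerivAt η ((ω t - η t) / ε) t) :
    ∀ t ∈ Icc 0 T,
      |η t - ω t| ≤ |η₀ - ω 0| * Real.exp (-t / ε)
        + Ctil * ε * (1 - Real.exp (-t / ε)) := by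
  intro t ht
  obtain ⟨ht0, htT⟩ := ht
  have hεne : ε ≠ 0 := hε.ne'
  set g : ℝ → ℝ := fun s => (η s - ω s) * Real.exp (s / ε) with hg
  have hgderiv : ∀ s ∈ Set.uIcc 0 t, HasDerivAt g (-(ω' s) * Real.exp (s / ε)) s := by
    intro s hs
    rw [Set.uIcc_of_le ht0] at hs
    have hsT : s ∈ Icc 0 T := ⟨hs.1, hs.2.trans htT⟩
    have h1 : HasDerivAt (fun s => η s - ω s) ((ω s - η s) / ε - ω' s) s :=
      (hode s hsT).sub (hω' s)
    have h2 : HasDerivAt (fun s => Real.exp (s / ε)) (Real.exp (s / ε) * (1 / ε)) s :=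
      ((hasDerivAt_id s).div_const ε).exp
    have h3 := h1.mul h2
    convert h3 using 1
    · rfl
    · rfl
    · rfl
    field_simp
    ring
  have hEcont : Continuous (fun s : ℝ => Real.exp (s / ε)) := by continuity
  have hint : IntervalIntegrable (fun s => -(ω' s) * Real.exp (s / ε))
      MeasureTheory.volume 0 t :=
    Continuous.intervalIntegrable (by continuity) 0 t
  have hFTC := intervalIntegral.integral_eq_sub_of_hasDerivAt hgderiv hint
  -- bound the integral
  have hint2 : IntervalIntegrable (fun s => Ctil * Real.exp (s / ε))
      MeasureTheory.volume 0 t :=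
    Continuous.intervalIntegrable (by continuity) 0 t
  have habs : |∫ s in (0:ℝ)..t, -(ω' s) * Real.exp (s / ε)| ≤
      ∫ s in (0:ℝ)..t, Ctil * Real.exp (s / ε) := by
    calc |∫ s in (0:ℝ)..t, -(ω' s) * Real.exp (s / ε)|
        ≤ ∫ s in (0:ℝ)..t, |ω' s| * Real.exp (s / ε) := by
          have := intervalIntegral.norm_integral_le_integral_norm
            (f := fun s => -(ω' s) * Real.exp (s / ε))
            (μ := MeasureTheory.volume) ht0
          simpa [Real.norm_eq_abs, abs_mul, abs_neg,
            abs_of_nonneg (Real.exp_pos _).le] using this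
      _ ≤ ∫ s in (0:ℝ)..t, Ctil * Real.exp (s / ε) := by
          apply intervalIntegral.integral_mono_on ht0 _ hint2
          · intro s hs
            have hsT : s ∈ Icc 0 T := ⟨hs.1, hs.2.trans htT⟩
            exact mul_le_mul_of_nonneg_right (hω'bdd s hsT) (Real.exp_pos _).le
          · exact Continuous.intervalIntegrable (by continuity) 0 t
  -- compute ∫ Ctil * exp(s/ε)
  have hcomp : (∫ s in (0:ℝ)..t, Ctil * Real.exp (s / ε)) =
      Ctil * ε * Real.exp (t / ε) - Ctil * ε * Real.exp (0 / ε) := by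
    apply intervalIntegral.integral_eq_sub_of_hasDerivAt
    · intro s _
      have : HasDerivAt (fun s => Ctil * ε * Real.exp (s / ε))
          (Ctil * ε * (Real.exp (s / ε) * (1 / ε))) s :=
        (((hasDerivAt_id s).div_const ε).exp).const_mul (Ctil * ε)
      convert this using 1
      · rfl
      · rfl
      field_simp
    · exact hint2
  have hgt : g t = g 0 + ∫ s in (0:ℝ)..t, -(ω' s) * Real.exp (s / ε) := by
    rw [hFTC]; ring
  have hg0 : g 0 = η₀ - ω 0 := by simp [hg, hinit]
  have hgtbound : |g t| ≤ |η₀ - ω 0| + Ctil * ε * (Real.exp (t / ε) - 1) := by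
    rw [hgt, hg0]
    calc |(η₀ - ω 0) + ∫ s in (0:ℝ)..t, -(ω' s) * Real.exp (s / ε)|
        ≤ |η₀ - ω 0| + |∫ s in (0:ℝ)..t, -(ω' s) * Real.exp (s / ε)| := abs_add_le _ _
      _ ≤ |η₀ - ω 0| + Ctil * ε * (Real.exp (t / ε) - 1) := by
          have := habs.trans_eq hcomp
          simp only [zero_div, Real.exp_zero] at this
          linarith
  -- convert back
  have hexp : Real.exp (t / ε) * Real.exp (-t / ε) = 1 := by
    rw [← Real.exp_add]; ring_nf; exact Real.exp_zero
  have heq : η t - ω t = g t * Real.exp (-t / ε) := by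
    have : g t = (η t - ω t) * Real.exp (t / ε) := rfl
    rw [this, mul_assoc, hexp, mul_one]
  rw [heq, abs_mul, abs_of_nonneg (Real.exp_pos _).le]
  have hb := mul_le_mul_of_nonneg_right hgtbound (Real.exp_pos (-t / ε)).le
  calc |g t| * Real.exp (-t / ε)
      ≤ (|η₀ - ω 0| + Ctil * ε * (Real.exp (t / ε) - 1)) * Real.exp (-t / ε) := hb
    _ = |η₀ - ω 0| * Real.exp (-t / ε) + Ctil * ε * (1 - Real.exp (-t / ε)) := by
        have h1 : (Real.exp (t / ε) - 1) * Real.exp (-t / ε) = 1 - Real.exp (-t / ε) := by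
          rw [sub_mul, hexp, one_mul]
        rw [add_mul, mul_assoc, h1]
end

section
/- Let ρ, σ be finite signed Borel measures on ℝ^d, μ a finite nonnegative Borel measure, V : ℝ^d × ℝ^d → ℝ bounded measurable with sup_x ∫_{ℝ^d} |V(x,y)| dμ(y) ≤ C_V, η : ℝ^d × ℝ^d → ℝ bounded measurable, and Φ an admissible flux interpolation with constant L_Φ. Then for every bounded measurable ψ with ‖ψ‖_∞ ≤ 1, |(1/2)∫∫ (ψ(y)−ψ(x)) η(x,y) Φ(d(ρ⊗μ)/dλ, d(μ⊗ρ)/dλ; V)(x,y) dλ(x,y) − (1/2)∫∫ (ψ(y)−ψ(x)) η(x,y) Φ(d(σ⊗μ)/dλ, d(μ⊗σ)/dλ; V)(x,y) dλ(x,y)| ≤ 2 L_Φ ‖η‖_∞ C_V ‖ρ − σ‖_{TV}, where λ is any common dominating measure for ρ⊗μ, μ⊗ρ, σ⊗μ, μ⊗σ. -/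
open Set MeasureTheory

variable {d : ℕ}

/-- Total variation norm of a finite signed Borel measure. -/
noncomputable def tvNorm {α : Type*} [MeasurableSpace α] (σ : SignedMeasure α) : ℝ :=
  (σ.totalVariation Set.univ).toReal

/-- `f` is a (signed) density of the signed product measure `ρ ⊗ μ` with respect to `lam`,
expressed via the Jordan decomposition: `ρ⁺ ⊗ μ + (f)_− · lam = ρ⁻ ⊗ μ + (f)_+ · lam`. -/
def IsDensityProdLeft (lam : Measure ((Fin d → ℝ) × (Fin d → ℝ)))
    (ρ : SignedMeasure (Fin d → ℝ)) (μ : Measure (Fin d → ℝ))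
    (f : (Fin d → ℝ) × (Fin d → ℝ) → ℝ) : Prop :=
  ρ.toJordanDecomposition.posPart.prod μ
      + lam.withDensity (fun p => ENNReal.ofReal (-(f p)))
    = ρ.toJordanDecomposition.negPart.prod μ
      + lam.withDensity (fun p => ENNReal.ofReal (f p))

/-- `f` is a (signed) density of the signed product measure `μ ⊗ ρ` with respect to `lam`. -/
def IsDensityProdRight (lam : Measure ((Fin d → ℝ) × (Fin d → ℝ)))
    (μ : Measure (Fin d → ℝ)) (ρ : SignedMeasure (Fin d → ℝ))
    (f : (Fin d → ℝ) × (Fin d → ℝ) → ℝ) : Prop :=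
  μ.prod ρ.toJordanDecomposition.posPart
      + lam.withDensity (fun p => ENNReal.ofReal (-(f p)))
    = μ.prod ρ.toJordanDecomposition.negPart
      + lam.withDensity (fun p => ENNReal.ofReal (f p))

section FluxAux

variable {γ : Type*} [MeasurableSpace γ]

private lemma ofReal_add_ofReal_neg (x : ℝ) :
    ENNReal.ofReal x + ENNReal.ofReal (-x) = ENNReal.ofReal |x| := by
  rcases le_total 0 x with hx | hx
  · rw [ENNReal.ofReal_eq_zero.mpr (by linarith : -x ≤ 0), add_zero, abs_of_nonneg hx]
  · rw [ENNReal.ofReal_eq_zero.mpr hx, zero_add, abs_of_nonpos hx]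

private lemma abs_sub_le_abs_add_abs' (a b : ℝ) : |a - b| ≤ |a| + |b| := by
  rw [sub_eq_add_neg]
  exact (abs_add_le _ _).trans (le_of_eq (by rw [abs_neg]))

private lemma density_pos_le (lam Pm Nm : Measure γ) (h : γ → ℝ) (hm : Measurable h)
    (hE : Pm + lam.withDensity (fun p => ENNReal.ofReal (-(h p)))
        = Nm + lam.withDensity (fun p => ENNReal.ofReal (h p))) :
    lam.withDensity (fun p => ENNReal.ofReal (h p)) ≤ Pm := by
  rw [Measure.le_iff]
  intro s hs
  set A : Set γ := {p | 0 < h p} with hAdef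
  have hAm : MeasurableSet A := measurableSet_lt measurable_const hm
  have key : lam.withDensity (fun p => ENNReal.ofReal (h p)) s
      = ∫⁻ p in s ∩ A, ENNReal.ofReal (h p) ∂lam := by
    rw [withDensity_apply _ hs, ← lintegral_inter_add_diff (fun p => ENNReal.ofReal (h p)) s hAm]
    have hz : ∫⁻ p in s \ A, ENNReal.ofReal (h p) ∂lam = ∫⁻ _ in s \ A, 0 ∂lam :=
      setLIntegral_congr_fun (hs.diff hAm) (fun p hp =>
        ENNReal.ofReal_eq_zero.mpr (not_lt.mp hp.2))
    simp only [hz, lintegral_zero, add_zero]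
  have hEs : Pm (s ∩ A) + lam.withDensity (fun p => ENNReal.ofReal (-(h p))) (s ∩ A)
      = Nm (s ∩ A) + lam.withDensity (fun p => ENNReal.ofReal (h p)) (s ∩ A) := by
    have := congrArg (fun m : Measure γ => m (s ∩ A)) hE
    simpa [Measure.add_apply] using this
  have hneg : lam.withDensity (fun p => ENNReal.ofReal (-(h p))) (s ∩ A) = 0 := by
    rw [withDensity_apply _ (hs.inter hAm)]
    have hz : ∫⁻ p in s ∩ A, ENNReal.ofReal (-(h p)) ∂lam = ∫⁻ _ in s ∩ A, 0 ∂lam :=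
      setLIntegral_congr_fun (hs.inter hAm) (fun p hp =>
        ENNReal.ofReal_eq_zero.mpr (by have : 0 < h p := hp.2; linarith))
    simp only [hz, lintegral_zero]
  rw [hneg, add_zero] at hEs
  calc lam.withDensity (fun p => ENNReal.ofReal (h p)) s
      = ∫⁻ p in s ∩ A, ENNReal.ofReal (h p) ∂lam := key
    _ = lam.withDensity (fun p => ENNReal.ofReal (h p)) (s ∩ A) :=
        (withDensity_apply _ (hs.inter hAm)).symm
    _ ≤ Nm (s ∩ A) + lam.withDensity (fun p => ENNReal.ofReal (h p)) (s ∩ A) := le_add_self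
    _ = Pm (s ∩ A) := hEs.symm
    _ ≤ Pm s := measure_mono inter_subset_left

private lemma density_neg_le (lam Pm Nm : Measure γ) (h : γ → ℝ) (hm : Measurable h)
    (hE : Pm + lam.withDensity (fun p => ENNReal.ofReal (-(h p)))
        = Nm + lam.withDensity (fun p => ENNReal.ofReal (h p))) :
    lam.withDensity (fun p => ENNReal.ofReal (-(h p))) ≤ Nm := by
  have := density_pos_le lam Nm Pm (fun p => -(h p)) hm.neg
    (by simp only [neg_neg]; exact hE.symm)
  exact this

private lemma density_integrable (lam Pm Nm : Measure γ)
    [IsFiniteMeasure Pm] [IsFiniteMeasure Nm]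
    (h : γ → ℝ) (hm : Measurable h)
    (hE : Pm + lam.withDensity (fun p => ENNReal.ofReal (-(h p)))
        = Nm + lam.withDensity (fun p => ENNReal.ofReal (h p))) :
    Integrable h lam := by
  have h1 := density_pos_le lam Pm Nm h hm hE
  have h2 := density_neg_le lam Pm Nm h hm hE
  refine ⟨hm.aestronglyMeasurable, ?_⟩
  rw [hasFiniteIntegral_iff_norm]
  have heq : ∫⁻ a, ENNReal.ofReal ‖h a‖ ∂lam
      = ∫⁻ a, (ENNReal.ofReal (h a) + ENNReal.ofReal (-(h a))) ∂lam := by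
    apply lintegral_congr
    intro a
    rw [ofReal_add_ofReal_neg, Real.norm_eq_abs]
  rw [heq, lintegral_add_left hm.ennreal_ofReal]
  have e1 : ∫⁻ a, ENNReal.ofReal (h a) ∂lam
      = lam.withDensity (fun p => ENNReal.ofReal (h p)) univ := by
    rw [withDensity_apply _ MeasurableSet.univ, Measure.restrict_univ]
  have e2 : ∫⁻ a, ENNReal.ofReal (-(h a)) ∂lam
      = lam.withDensity (fun p => ENNReal.ofReal (-(h p))) univ := by
    rw [withDensity_apply _ MeasurableSet.univ, Measure.restrict_univ]
  rw [e1, e2]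
  exact ENNReal.add_lt_top.mpr
    ⟨lt_of_le_of_lt (h1 univ) (measure_lt_top Pm univ),
     lt_of_le_of_lt (h2 univ) (measure_lt_top Nm univ)⟩

private lemma density_setIntegral (lam Pm Nm : Measure γ)
    [IsFiniteMeasure Pm] [IsFiniteMeasure Nm]
    (h : γ → ℝ) (hm : Measurable h)
    (hE : Pm + lam.withDensity (fun p => ENNReal.ofReal (-(h p)))
        = Nm + lam.withDensity (fun p => ENNReal.ofReal (h p)))
    {s : Set γ} (hs : MeasurableSet s) :
    ∫ p in s, h p ∂lam = (Pm s).toReal - (Nm s).toReal := by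
  have h1 := density_pos_le lam Pm Nm h hm hE
  have h2 := density_neg_le lam Pm Nm h hm hE
  have hi : Integrable h (lam.restrict s) :=
    (density_integrable lam Pm Nm h hm hE).restrict
  rw [integral_eq_lintegral_pos_part_sub_lintegral_neg_part hi]
  have e1 : ∫⁻ a, ENNReal.ofReal (h a) ∂(lam.restrict s)
      = lam.withDensity (fun p => ENNReal.ofReal (h p)) s := (withDensity_apply _ hs).symm
  have e2 : ∫⁻ a, ENNReal.ofReal (-h a) ∂(lam.restrict s)
      = lam.withDensity (fun p => ENNReal.ofReal (-(h p))) s := (withDensity_apply _ hs).symm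
  rw [e1, e2]
  have hEs : Pm s + lam.withDensity (fun p => ENNReal.ofReal (-(h p))) s
      = Nm s + lam.withDensity (fun p => ENNReal.ofReal (h p)) s := by
    have := congrArg (fun m : Measure γ => m s) hE
    simpa [Measure.add_apply] using this
  have fin1 : lam.withDensity (fun p => ENNReal.ofReal (h p)) s ≠ ⊤ :=
    (lt_of_le_of_lt (h1 s) (measure_lt_top Pm s)).ne
  have fin2 : lam.withDensity (fun p => ENNReal.ofReal (-(h p))) s ≠ ⊤ :=
    (lt_of_le_of_lt (h2 s) (measure_lt_top Nm s)).ne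
  have := congrArg ENNReal.toReal hEs
  rw [ENNReal.toReal_add (measure_ne_top Pm s) fin2,
    ENNReal.toReal_add (measure_ne_top Nm s) fin1] at this
  linarith

private lemma density_sub (lam Pm₁ Nm₁ Pm₂ Nm₂ Pm Nm : Measure γ)
    [IsFiniteMeasure Pm₁] [IsFiniteMeasure Nm₁] [IsFiniteMeasure Pm₂] [IsFiniteMeasure Nm₂]
    [IsFiniteMeasure Pm] [IsFiniteMeasure Nm]
    (h₁ h₂ : γ → ℝ) (hm₁ : Measurable h₁) (hm₂ : Measurable h₂)
    (hE₁ : Pm₁ + lam.withDensity (fun p => ENNReal.ofReal (-(h₁ p)))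
        = Nm₁ + lam.withDensity (fun p => ENNReal.ofReal (h₁ p)))
    (hE₂ : Pm₂ + lam.withDensity (fun p => ENNReal.ofReal (-(h₂ p)))
        = Nm₂ + lam.withDensity (fun p => ENNReal.ofReal (h₂ p)))
    (hcompat : Pm₁ + Nm₂ + Nm = Nm₁ + Pm₂ + Pm) :
    Pm + lam.withDensity (fun p => ENNReal.ofReal (-(h₁ p - h₂ p)))
      = Nm + lam.withDensity (fun p => ENNReal.ofReal (h₁ p - h₂ p)) := by
  have hint₁ : Integrable h₁ lam := density_integrable lam Pm₁ Nm₁ h₁ hm₁ hE₁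
  have hint₂ : Integrable h₂ lam := density_integrable lam Pm₂ Nm₂ h₂ hm₂ hE₂
  ext s hs
  simp only [Measure.add_apply]
  have finp : lam.withDensity (fun p => ENNReal.ofReal (h₁ p - h₂ p)) s ≠ ⊤ := by
    have hb : lam.withDensity (fun p => ENNReal.ofReal (h₁ p - h₂ p)) s
        ≤ lam.withDensity (fun p => ENNReal.ofReal (h₁ p)) s
          + lam.withDensity (fun p => ENNReal.ofReal (-(h₂ p))) s := by
      rw [withDensity_apply _ hs, withDensity_apply _ hs, withDensity_apply _ hs,
        ← lintegral_add_left (hm₁.ennreal_ofReal)]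
      apply lintegral_mono
      intro p
      calc ENNReal.ofReal (h₁ p - h₂ p) = ENNReal.ofReal (h₁ p + -(h₂ p)) := by ring_nf
        _ ≤ ENNReal.ofReal (h₁ p) + ENNReal.ofReal (-(h₂ p)) := ENNReal.ofReal_add_le
    exact (lt_of_le_of_lt hb (ENNReal.add_lt_top.mpr
      ⟨lt_of_le_of_lt ((density_pos_le lam Pm₁ Nm₁ h₁ hm₁ hE₁) s) (measure_lt_top Pm₁ s),
       lt_of_le_of_lt ((density_neg_le lam Pm₂ Nm₂ h₂ hm₂ hE₂) s) (measure_lt_top Nm₂ s)⟩)).ne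
  have finn : lam.withDensity (fun p => ENNReal.ofReal (-(h₁ p - h₂ p))) s ≠ ⊤ := by
    have hb : lam.withDensity (fun p => ENNReal.ofReal (-(h₁ p - h₂ p))) s
        ≤ lam.withDensity (fun p => ENNReal.ofReal (-(h₁ p))) s
          + lam.withDensity (fun p => ENNReal.ofReal (h₂ p)) s := by
      rw [withDensity_apply _ hs, withDensity_apply _ hs, withDensity_apply _ hs,
        ← lintegral_add_left (f := fun a => ENNReal.ofReal (-(h₁ a))) (hm₁.neg.ennreal_ofReal)]
      apply lintegral_mono
      intro p
      calc ENNReal.ofReal (-(h₁ p - h₂ p)) = ENNReal.ofReal (-(h₁ p) + h₂ p) := by ring_nf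
        _ ≤ ENNReal.ofReal (-(h₁ p)) + ENNReal.ofReal (h₂ p) := ENNReal.ofReal_add_le
    exact (lt_of_le_of_lt hb (ENNReal.add_lt_top.mpr
      ⟨lt_of_le_of_lt ((density_neg_le lam Pm₁ Nm₁ h₁ hm₁ hE₁) s) (measure_lt_top Nm₁ s),
       lt_of_le_of_lt ((density_pos_le lam Pm₂ Nm₂ h₂ hm₂ hE₂) s) (measure_lt_top Pm₂ s)⟩)).ne
  refine (ENNReal.toReal_eq_toReal_iff'
    (ENNReal.add_ne_top.mpr ⟨measure_ne_top Pm s, finn⟩)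
    (ENNReal.add_ne_top.mpr ⟨measure_ne_top Nm s, finp⟩)).mp ?_
  rw [ENNReal.toReal_add (measure_ne_top Pm s) finn,
    ENNReal.toReal_add (measure_ne_top Nm s) finp]
  have hsub : ∫ p in s, (h₁ p - h₂ p) ∂lam
      = ((Pm₁ s).toReal - (Nm₁ s).toReal) - ((Pm₂ s).toReal - (Nm₂ s).toReal) := by
    rw [integral_sub hint₁.restrict hint₂.restrict,
      density_setIntegral lam Pm₁ Nm₁ h₁ hm₁ hE₁ hs,
      density_setIntegral lam Pm₂ Nm₂ h₂ hm₂ hE₂ hs]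
  have hrep : ∫ p in s, (h₁ p - h₂ p) ∂lam
      = (lam.withDensity (fun p => ENNReal.ofReal (h₁ p - h₂ p)) s).toReal
        - (lam.withDensity (fun p => ENNReal.ofReal (-(h₁ p - h₂ p))) s).toReal := by
    have hintd : Integrable (fun p => h₁ p - h₂ p) lam := hint₁.sub hint₂
    rw [integral_eq_lintegral_pos_part_sub_lintegral_neg_part hintd.restrict,
      withDensity_apply _ hs, withDensity_apply _ hs]
  have hcs : (Pm₁ s).toReal + (Nm₂ s).toReal + (Nm s).toReal
      = (Nm₁ s).toReal + (Pm₂ s).toReal + (Pm s).toReal := by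
    have := congrArg (fun m : Measure γ => m s) hcompat
    simp only [Measure.add_apply] at this
    have := congrArg ENNReal.toReal this
    rw [ENNReal.toReal_add (ENNReal.add_ne_top.mpr ⟨measure_ne_top _ s, measure_ne_top _ s⟩)
        (measure_ne_top _ s),
      ENNReal.toReal_add (measure_ne_top _ s) (measure_ne_top _ s),
      ENNReal.toReal_add (ENNReal.add_ne_top.mpr ⟨measure_ne_top _ s, measure_ne_top _ s⟩)
        (measure_ne_top _ s),
      ENNReal.toReal_add (measure_ne_top _ s) (measure_ne_top _ s)] at this
    linarith
  rw [hsub] at hrep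
  linarith

private lemma jordan_compat (ρ σ : SignedMeasure γ) :
    ρ.toJordanDecomposition.posPart + σ.toJordanDecomposition.negPart
        + (ρ - σ).toJordanDecomposition.negPart
      = ρ.toJordanDecomposition.negPart + σ.toJordanDecomposition.posPart
        + (ρ - σ).toJordanDecomposition.posPart := by
  ext s hs
  have happ : ∀ τ : SignedMeasure γ,
      τ s = (τ.toJordanDecomposition.posPart s).toReal
        - (τ.toJordanDecomposition.negPart s).toReal := by
    intro τ
    conv_lhs => rw [← τ.toSignedMeasure_toJordanDecomposition]
    rw [JordanDecomposition.toSignedMeasure, VectorMeasure.sub_apply,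
      Measure.toSignedMeasure_apply_measurable hs, Measure.toSignedMeasure_apply_measurable hs]
    rfl
  have h1 := happ ρ
  have h2 := happ σ
  have h3 := happ (ρ - σ)
  have h4 : (ρ - σ) s = ρ s - σ s := VectorMeasure.sub_apply _ _ _
  simp only [Measure.add_apply]
  refine (ENNReal.toReal_eq_toReal_iff'
    (ENNReal.add_ne_top.mpr ⟨ENNReal.add_ne_top.mpr ⟨measure_ne_top _ s, measure_ne_top _ s⟩,
      measure_ne_top _ s⟩)
    (ENNReal.add_ne_top.mpr ⟨ENNReal.add_ne_top.mpr ⟨measure_ne_top _ s, measure_ne_top _ s⟩,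
      measure_ne_top _ s⟩)).mp ?_
  rw [ENNReal.toReal_add (ENNReal.add_ne_top.mpr ⟨measure_ne_top _ s, measure_ne_top _ s⟩)
      (measure_ne_top _ s),
    ENNReal.toReal_add (measure_ne_top _ s) (measure_ne_top _ s),
    ENNReal.toReal_add (ENNReal.add_ne_top.mpr ⟨measure_ne_top _ s, measure_ne_top _ s⟩)
      (measure_ne_top _ s),
    ENNReal.toReal_add (measure_ne_top _ s) (measure_ne_top _ s)]
  linarith

private lemma phi_continuous (Φ : ℝ → ℝ → ℝ → ℝ) (LΦ : ℝ) (hL0 : 0 ≤ LΦ)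
    (hlip₁ : ∀ a b w v : ℝ, |Φ a b w - Φ a b v| ≤ LΦ * (|a| + |b|) * |w - v|)
    (hlip₂ : ∀ a b c e v : ℝ, |Φ a b v - Φ c e v| ≤ LΦ * (|a - c| + |b - e|) * |v|) :
    Continuous (fun q : ℝ × ℝ × ℝ => Φ q.1 q.2.1 q.2.2) := by
  rw [continuous_iff_continuousAt]
  rintro ⟨a₀, b₀, v₀⟩
  rw [Metric.continuousAt_iff]
  intro ε hε
  set K : ℝ := LΦ * (|a₀| + |b₀| + 2) + LΦ * 2 * |v₀| with hKdef
  have hK0 : 0 ≤ K := by positivity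
  set δ : ℝ := min 1 (ε / (K + 1)) with hδdef
  have hδpos : 0 < δ := lt_min one_pos (div_pos hε (by linarith))
  have hδ1 : δ ≤ 1 := min_le_left _ _
  have hδ2 : δ ≤ ε / (K + 1) := min_le_right _ _
  refine ⟨δ, hδpos, ?_⟩
  rintro ⟨a, b, v⟩ hdist
  simp only [Prod.dist_eq, Real.dist_eq, max_lt_iff] at hdist
  have ha := hdist.1
  have hb := hdist.2.1
  have hv := hdist.2.2
  have ha' : |a - a₀| ≤ δ := le_of_lt ha
  have hb' : |b - b₀| ≤ δ := le_of_lt hb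
  have hv' : |v - v₀| ≤ δ := le_of_lt hv
  have habs : |a| ≤ |a₀| + 1 := by
    have := abs_sub_abs_le_abs_sub a a₀; linarith
  have hbabs : |b| ≤ |b₀| + 1 := by
    have := abs_sub_abs_le_abs_sub b b₀; linarith
  have tri : |Φ a b v - Φ a₀ b₀ v₀|
      ≤ |Φ a b v - Φ a b v₀| + |Φ a b v₀ - Φ a₀ b₀ v₀| := by
    have := abs_sub_le (Φ a b v) (Φ a b v₀) (Φ a₀ b₀ v₀); linarith
  have t1 : |Φ a b v - Φ a b v₀| ≤ LΦ * (|a₀| + |b₀| + 2) * δ := by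
    refine le_trans (hlip₁ a b v v₀) ?_
    have h1 : LΦ * (|a| + |b|) ≤ LΦ * (|a₀| + |b₀| + 2) := by
      apply mul_le_mul_of_nonneg_left _ hL0
      linarith
    exact mul_le_mul h1 hv' (abs_nonneg _) (by positivity)
  have t2 : |Φ a b v₀ - Φ a₀ b₀ v₀| ≤ LΦ * 2 * |v₀| * δ := by
    refine le_trans (hlip₂ a b a₀ b₀ v₀) ?_
    have h1 : LΦ * (|a - a₀| + |b - b₀|) ≤ LΦ * (2 * δ) := by
      apply mul_le_mul_of_nonneg_left _ hL0
      linarith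
    calc LΦ * (|a - a₀| + |b - b₀|) * |v₀| ≤ LΦ * (2 * δ) * |v₀| :=
          mul_le_mul_of_nonneg_right h1 (abs_nonneg _)
      _ = LΦ * 2 * |v₀| * δ := by ring
  have hK1 : K * δ < ε := by
    have h1 : K * δ ≤ K * (ε / (K + 1)) := mul_le_mul_of_nonneg_left hδ2 hK0
    have h2 : K * (ε / (K + 1)) < ε := by
      rw [show K * (ε / (K + 1)) = (K / (K + 1)) * ε by ring]
      have h3 : K / (K + 1) < 1 := (div_lt_one (by linarith)).mpr (lt_add_one K)
      calc (K / (K + 1)) * ε < 1 * ε := by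
            apply mul_lt_mul_of_pos_right h3 hε
        _ = ε := one_mul ε
    exact lt_of_le_of_lt h1 h2
  calc dist (Φ a b v) (Φ a₀ b₀ v₀) = |Φ a b v - Φ a₀ b₀ v₀| := Real.dist_eq _ _
    _ ≤ LΦ * (|a₀| + |b₀| + 2) * δ + LΦ * 2 * |v₀| * δ := by linarith
    _ = K * δ := by ring
    _ < ε := hK1

private lemma lint_bound_left {X : Type*} [MeasurableSpace X] (lam : Measure (X × X))
    (ν μ : Measure X) [IsFiniteMeasure ν] [IsFiniteMeasure μ]
    (h V : X × X → ℝ) (hm : Measurable h) (hVm : Measurable V)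
    (CV CB : ℝ) (hVb : ∀ p, |V p| ≤ CB)
    (hwd : lam.withDensity (fun p => ENNReal.ofReal |h p|) ≤ ν.prod μ)
    (hcomp : ∀ x, ∫ y, |V (x, y)| ∂μ ≤ CV) :
    ∫⁻ p, ENNReal.ofReal (|h p| * |V p|) ∂lam ≤ ENNReal.ofReal CV * ν univ := by
  have hVmeas2 : Measurable fun p : X × X => ENNReal.ofReal |V p| := hVm.abs.ennreal_ofReal
  calc ∫⁻ p, ENNReal.ofReal (|h p| * |V p|) ∂lam
      = ∫⁻ p, ((fun p => ENNReal.ofReal |h p|) * (fun p => ENNReal.ofReal |V p|)) p ∂lam := by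
        apply lintegral_congr
        intro p
        simp only [Pi.mul_apply]
        rw [ENNReal.ofReal_mul (abs_nonneg _)]
    _ = ∫⁻ p, ENNReal.ofReal |V p| ∂(lam.withDensity (fun p => ENNReal.ofReal |h p|)) :=
        (lintegral_withDensity_eq_lintegral_mul lam hm.abs.ennreal_ofReal hVmeas2).symm
    _ ≤ ∫⁻ p, ENNReal.ofReal |V p| ∂(ν.prod μ) := lintegral_mono' hwd le_rfl
    _ = ∫⁻ x, ∫⁻ y, ENNReal.ofReal |V (x, y)| ∂μ ∂ν :=
        lintegral_prod _ hVmeas2.aemeasurable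
    _ ≤ ∫⁻ _, ENNReal.ofReal CV ∂ν := by
        apply lintegral_mono
        intro x
        have hint : Integrable (fun y => |V (x, y)|) μ := by
          apply Integrable.mono' (integrable_const CB)
            ((hVm.comp measurable_prodMk_left).abs).aestronglyMeasurable
          exact Filter.Eventually.of_forall fun y => by
            rw [Real.norm_eq_abs, abs_abs]; exact hVb (x, y)
        show ∫⁻ y, ENNReal.ofReal |V (x, y)| ∂μ ≤ ENNReal.ofReal CV
        rw [← ofReal_integral_eq_lintegral_ofReal hint
          (Filter.Eventually.of_forall fun y => abs_nonneg _)]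
        exact ENNReal.ofReal_le_ofReal (hcomp x)
    _ = ENNReal.ofReal CV * ν univ := lintegral_const _

private lemma lint_bound_right {X : Type*} [MeasurableSpace X] (lam : Measure (X × X))
    (ν μ : Measure X) [IsFiniteMeasure ν] [IsFiniteMeasure μ]
    (h V : X × X → ℝ) (hm : Measurable h) (hVm : Measurable V)
    (CV CB : ℝ) (hVb : ∀ p, |V p| ≤ CB)
    (hwd : lam.withDensity (fun p => ENNReal.ofReal |h p|) ≤ μ.prod ν)
    (hcomp : ∀ y, ∫ x, |V (x, y)| ∂μ ≤ CV) :
    ∫⁻ p, ENNReal.ofReal (|h p| * |V p|) ∂lam ≤ ENNReal.ofReal CV * ν univ := by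
  have hVmeas2 : Measurable fun p : X × X => ENNReal.ofReal |V p| := hVm.abs.ennreal_ofReal
  calc ∫⁻ p, ENNReal.ofReal (|h p| * |V p|) ∂lam
      = ∫⁻ p, ((fun p => ENNReal.ofReal |h p|) * (fun p => ENNReal.ofReal |V p|)) p ∂lam := by
        apply lintegral_congr
        intro p
        simp only [Pi.mul_apply]
        rw [ENNReal.ofReal_mul (abs_nonneg _)]
    _ = ∫⁻ p, ENNReal.ofReal |V p| ∂(lam.withDensity (fun p => ENNReal.ofReal |h p|)) :=
        (lintegral_withDensity_eq_lintegral_mul lam hm.abs.ennreal_ofReal hVmeas2).symm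
    _ ≤ ∫⁻ p, ENNReal.ofReal |V p| ∂(μ.prod ν) := lintegral_mono' hwd le_rfl
    _ = ∫⁻ y, ∫⁻ x, ENNReal.ofReal |V (x, y)| ∂μ ∂ν :=
        lintegral_prod_symm _ hVmeas2.aemeasurable
    _ ≤ ∫⁻ _, ENNReal.ofReal CV ∂ν := by
        apply lintegral_mono
        intro y
        have hint : Integrable (fun x => |V (x, y)|) μ := by
          apply Integrable.mono' (integrable_const CB)
            ((hVm.comp measurable_prodMk_right).abs).aestronglyMeasurable
          exact Filter.Eventually.of_forall fun x => by
            rw [Real.norm_eq_abs, abs_abs]; exact hVb (x, y)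
        show ∫⁻ x, ENNReal.ofReal |V (x, y)| ∂μ ≤ ENNReal.ofReal CV
        rw [← ofReal_integral_eq_lintegral_ofReal hint
          (Filter.Eventually.of_forall fun x => abs_nonneg _)]
        exact ENNReal.ofReal_le_ofReal (hcomp y)
    _ = ENNReal.ofReal CV * ν univ := lintegral_const _

end FluxAux

/-- stability of the nonlocal divergence of the flux `F^Φ[μ,η;·,V]` with
respect to the mass variable: for an admissible interpolation `Φ` (constant `L_Φ`), an
antisymmetric velocity `V` with compressibility bound `C_V`, a bounded weight `η` and any
test function `ψ` with `‖ψ‖_∞ ≤ 1`, the difference of the flux pairings for the masses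
`ρ` and `σ` (with densities `f₁,f₂` resp. `g₁,g₂` w.r.t. a common dominating measure
`lam`) is bounded by `2 L_Φ ‖η‖_∞ C_V ‖ρ − σ‖_TV`. -/
theorem flux_divergence_stability
    (μ : Measure (Fin d → ℝ)) [IsFiniteMeasure μ]
    (lam : Measure ((Fin d → ℝ) × (Fin d → ℝ))) [SigmaFinite lam]
    (ρ σ : SignedMeasure (Fin d → ℝ))
    (f₁ f₂ g₁ g₂ η V : (Fin d → ℝ) × (Fin d → ℝ) → ℝ)
    (ψ : (Fin d → ℝ) → ℝ)
    (Φ : ℝ → ℝ → ℝ → ℝ) (LΦ CV Cη : ℝ)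
    -- densities with respect to the common dominating measure `lam`
    (hf₁ : IsDensityProdLeft lam ρ μ f₁) (hf₂ : IsDensityProdRight lam μ ρ f₂)
    (hg₁ : IsDensityProdLeft lam σ μ g₁) (hg₂ : IsDensityProdRight lam μ σ g₂)
    (hf₁m : Measurable f₁) (hf₂m : Measurable f₂)
    (hg₁m : Measurable g₁) (hg₂m : Measurable g₂)
    -- admissible interpolation
    (hdeg₁ : ∀ v : ℝ, Φ 0 0 v = 0) (hdeg₂ : ∀ a b : ℝ, Φ a b 0 = 0)
    (hlip₁ : ∀ a b w v : ℝ, |Φ a b w - Φ a b v| ≤ LΦ * (|a| + |b|) * |w - v|)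
    (hlip₂ : ∀ a b c e v : ℝ, |Φ a b v - Φ c e v| ≤ LΦ * (|a - c| + |b - e|) * |v|)
    (hhom : ∀ α a b w : ℝ, 0 < α → Φ (α * a) (α * b) w = α * Φ a b w)
    -- velocity field: bounded measurable, antisymmetric, uniformly compressible
    (hVmeas : Measurable V) (hVbdd : ∃ CB : ℝ, ∀ p, |V p| ≤ CB)
    (hVanti : ∀ x y, V (y, x) = -V (x, y))
    (hVcomp : ∀ x, ∫ y, |V (x, y)| ∂μ ≤ CV)
    -- weight function: bounded measurable with `‖η‖_∞ ≤ Cη`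
    (hηmeas : Measurable η) (hηbdd : ∀ p, |η p| ≤ Cη)
    -- test function
    (hψmeas : Measurable ψ) (hψbdd : ∀ x, |ψ x| ≤ 1) :
    |(1/2) * (∫ p, (ψ p.2 - ψ p.1) * η p * Φ (f₁ p) (f₂ p) (V p) ∂lam)
      - (1/2) * (∫ p, (ψ p.2 - ψ p.1) * η p * Φ (g₁ p) (g₂ p) (V p) ∂lam)|
      ≤ 2 * LΦ * Cη * CV * tvNorm (ρ - σ) := by
  classical
  obtain ⟨CB, hCB⟩ := hVbdd
  set x0 : Fin d → ℝ := fun _ => 0 with hx0def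
  -- positivity of the constants
  have hL0 : 0 ≤ LΦ := by
    have h := hlip₂ 1 0 0 0 1
    rw [hdeg₁ 1, sub_zero] at h
    norm_num at h
    linarith [abs_nonneg (Φ 1 0 1)]
  have hCη0 : 0 ≤ Cη := le_trans (abs_nonneg _) (hηbdd (x0, x0))
  have hCB0 : 0 ≤ CB := le_trans (abs_nonneg _) (hCB (x0, x0))
  have hCV0 : 0 ≤ CV := le_trans (integral_nonneg fun y => abs_nonneg _) (hVcomp x0)
  have hψ2 : ∀ p : (Fin d → ℝ) × (Fin d → ℝ), |ψ p.2 - ψ p.1| ≤ 2 := by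
    intro p
    have h1 := abs_le.mp (hψbdd p.1)
    have h2 := abs_le.mp (hψbdd p.2)
    exact abs_le.mpr ⟨by linarith, by linarith⟩
  -- unfold density hypotheses
  unfold IsDensityProdLeft at hf₁ hg₁
  unfold IsDensityProdRight at hf₂ hg₂
  -- measurability of the flux integrands
  have hcont := phi_continuous Φ LΦ hL0 hlip₁ hlip₂
  have hΦf : Measurable fun p => Φ (f₁ p) (f₂ p) (V p) :=
    hcont.measurable.comp (hf₁m.prodMk (hf₂m.prodMk hVmeas))
  have hΦg : Measurable fun p => Φ (g₁ p) (g₂ p) (V p) :=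
    hcont.measurable.comp (hg₁m.prodMk (hg₂m.prodMk hVmeas))
  -- integrability of the densities
  have hf₁int : Integrable f₁ lam := density_integrable lam _ _ f₁ hf₁m hf₁
  have hf₂int : Integrable f₂ lam := density_integrable lam _ _ f₂ hf₂m hf₂
  have hg₁int : Integrable g₁ lam := density_integrable lam _ _ g₁ hg₁m hg₁
  have hg₂int : Integrable g₂ lam := density_integrable lam _ _ g₂ hg₂m hg₂
  -- pointwise bound on Φ
  have hΦboundf : ∀ a b v : ℝ, |Φ a b v| ≤ LΦ * (|a| + |b|) * |v| := by
    intro a b v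
    have h := hlip₁ a b v 0
    rw [hdeg₂, sub_zero, sub_zero] at h
    exact h
  -- integrability of the two main integrands
  have hFmeas : Measurable fun p : (Fin d → ℝ) × (Fin d → ℝ) =>
      (ψ p.2 - ψ p.1) * η p * Φ (f₁ p) (f₂ p) (V p) :=
    (((hψmeas.comp measurable_snd).sub (hψmeas.comp measurable_fst)).mul hηmeas).mul hΦf
  have hGmeas : Measurable fun p : (Fin d → ℝ) × (Fin d → ℝ) =>
      (ψ p.2 - ψ p.1) * η p * Φ (g₁ p) (g₂ p) (V p) :=
    (((hψmeas.comp measurable_snd).sub (hψmeas.comp measurable_fst)).mul hηmeas).mul hΦg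
  have hFint : Integrable (fun p => (ψ p.2 - ψ p.1) * η p * Φ (f₁ p) (f₂ p) (V p)) lam := by
    apply Integrable.mono' (((hf₁int.abs.add hf₂int.abs)).const_mul (2 * Cη * LΦ * CB))
      hFmeas.aestronglyMeasurable
    filter_upwards with p
    rw [Real.norm_eq_abs]
    calc |(ψ p.2 - ψ p.1) * η p * Φ (f₁ p) (f₂ p) (V p)|
        = |ψ p.2 - ψ p.1| * |η p| * |Φ (f₁ p) (f₂ p) (V p)| := by rw [abs_mul, abs_mul]
      _ ≤ 2 * Cη * (LΦ * (|f₁ p| + |f₂ p|) * CB) := by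
          apply mul_le_mul
          · exact mul_le_mul (hψ2 p) (hηbdd p) (abs_nonneg _) (by norm_num)
          · calc |Φ (f₁ p) (f₂ p) (V p)| ≤ LΦ * (|f₁ p| + |f₂ p|) * |V p| := hΦboundf _ _ _
              _ ≤ LΦ * (|f₁ p| + |f₂ p|) * CB :=
                  mul_le_mul_of_nonneg_left (hCB p) (by positivity)
          · exact abs_nonneg _
          · exact mul_nonneg (by norm_num) hCη0
      _ = 2 * Cη * LΦ * CB * (|f₁ p| + |f₂ p|) := by ring
  have hGint : Integrable (fun p => (ψ p.2 - ψ p.1) * η p * Φ (g₁ p) (g₂ p) (V p)) lam := by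
    apply Integrable.mono' (((hg₁int.abs.add hg₂int.abs)).const_mul (2 * Cη * LΦ * CB))
      hGmeas.aestronglyMeasurable
    filter_upwards with p
    rw [Real.norm_eq_abs]
    calc |(ψ p.2 - ψ p.1) * η p * Φ (g₁ p) (g₂ p) (V p)|
        = |ψ p.2 - ψ p.1| * |η p| * |Φ (g₁ p) (g₂ p) (V p)| := by rw [abs_mul, abs_mul]
      _ ≤ 2 * Cη * (LΦ * (|g₁ p| + |g₂ p|) * CB) := by
          apply mul_le_mul
          · exact mul_le_mul (hψ2 p) (hηbdd p) (abs_nonneg _) (by norm_num)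
          · calc |Φ (g₁ p) (g₂ p) (V p)| ≤ LΦ * (|g₁ p| + |g₂ p|) * |V p| := hΦboundf _ _ _
              _ ≤ LΦ * (|g₁ p| + |g₂ p|) * CB :=
                  mul_le_mul_of_nonneg_left (hCB p) (by positivity)
          · exact abs_nonneg _
          · exact mul_nonneg (by norm_num) hCη0
      _ = 2 * Cη * LΦ * CB * (|g₁ p| + |g₂ p|) := by ring
  -- the difference densities
  have hcompatL : ρ.toJordanDecomposition.posPart.prod μ
        + σ.toJordanDecomposition.negPart.prod μ
        + (ρ - σ).toJordanDecomposition.negPart.prod μ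
      = ρ.toJordanDecomposition.negPart.prod μ
        + σ.toJordanDecomposition.posPart.prod μ
        + (ρ - σ).toJordanDecomposition.posPart.prod μ := by
    have h2 := congrArg (fun κ : Measure (Fin d → ℝ) => κ.prod μ) (jordan_compat ρ σ)
    simpa only [Measure.add_prod] using h2
  have hcompatR : μ.prod ρ.toJordanDecomposition.posPart
        + μ.prod σ.toJordanDecomposition.negPart
        + μ.prod (ρ - σ).toJordanDecomposition.negPart
      = μ.prod ρ.toJordanDecomposition.negPart
        + μ.prod σ.toJordanDecomposition.posPart
        + μ.prod (ρ - σ).toJordanDecomposition.posPart := by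
    have h2 := congrArg (fun κ : Measure (Fin d → ℝ) => μ.prod κ) (jordan_compat ρ σ)
    simpa only [Measure.prod_add] using h2
  have hEL := density_sub lam _ _ _ _
    ((ρ - σ).toJordanDecomposition.posPart.prod μ)
    ((ρ - σ).toJordanDecomposition.negPart.prod μ)
    f₁ g₁ hf₁m hg₁m hf₁ hg₁ hcompatL
  have hER := density_sub lam _ _ _ _
    (μ.prod (ρ - σ).toJordanDecomposition.posPart)
    (μ.prod (ρ - σ).toJordanDecomposition.negPart)
    f₂ g₂ hf₂m hg₂m hf₂ hg₂ hcompatR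
  -- domination of the |difference| densities
  have hwdL : lam.withDensity (fun p => ENNReal.ofReal |f₁ p - g₁ p|)
      ≤ ((ρ - σ).toJordanDecomposition.posPart
          + (ρ - σ).toJordanDecomposition.negPart).prod μ := by
    have hp := density_pos_le lam _ _ (fun p => f₁ p - g₁ p) (hf₁m.sub hg₁m) hEL
    have hn := density_neg_le lam _ _ (fun p => f₁ p - g₁ p) (hf₁m.sub hg₁m) hEL
    rw [Measure.le_iff]
    intro s hs
    rw [withDensity_apply _ hs]
    have hsplit : ∫⁻ p in s, ENNReal.ofReal |f₁ p - g₁ p| ∂lam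
        = ∫⁻ p in s, (ENNReal.ofReal (f₁ p - g₁ p)
            + ENNReal.ofReal (-(f₁ p - g₁ p))) ∂lam := by
      apply lintegral_congr
      intro p
      rw [ofReal_add_ofReal_neg]
    rw [hsplit, lintegral_add_left (f := fun p => ENNReal.ofReal (f₁ p - g₁ p)) (hf₁m.sub hg₁m).ennreal_ofReal,
      ← withDensity_apply _ hs, ← withDensity_apply _ hs, Measure.add_prod,
      Measure.add_apply]
    exact add_le_add (hp s) (hn s)
  have hwdR : lam.withDensity (fun p => ENNReal.ofReal |f₂ p - g₂ p|)
      ≤ μ.prod ((ρ - σ).toJordanDecomposition.posPart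
          + (ρ - σ).toJordanDecomposition.negPart) := by
    have hp := density_pos_le lam _ _ (fun p => f₂ p - g₂ p) (hf₂m.sub hg₂m) hER
    have hn := density_neg_le lam _ _ (fun p => f₂ p - g₂ p) (hf₂m.sub hg₂m) hER
    rw [Measure.le_iff]
    intro s hs
    rw [withDensity_apply _ hs]
    have hsplit : ∫⁻ p in s, ENNReal.ofReal |f₂ p - g₂ p| ∂lam
        = ∫⁻ p in s, (ENNReal.ofReal (f₂ p - g₂ p)
            + ENNReal.ofReal (-(f₂ p - g₂ p))) ∂lam := by
      apply lintegral_congr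
      intro p
      rw [ofReal_add_ofReal_neg]
    rw [hsplit, lintegral_add_left (f := fun p => ENNReal.ofReal (f₂ p - g₂ p)) (hf₂m.sub hg₂m).ennreal_ofReal,
      ← withDensity_apply _ hs, ← withDensity_apply _ hs, Measure.prod_add,
      Measure.add_apply]
    exact add_le_add (hp s) (hn s)
  -- compressibility in the second variable, via antisymmetry
  have hVcomp' : ∀ y, ∫ x, |V (x, y)| ∂μ ≤ CV := by
    intro y
    calc ∫ x, |V (x, y)| ∂μ = ∫ x, |V (y, x)| ∂μ := by
          apply integral_congr_ae
          filter_upwards with x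
          rw [hVanti y x, abs_neg]
      _ ≤ CV := hVcomp y
  -- integral bounds for the difference terms
  have hAmeas : Measurable fun p => |f₁ p - g₁ p| * |V p| :=
    (hf₁m.sub hg₁m).abs.mul hVmeas.abs
  have hBmeas : Measurable fun p => |f₂ p - g₂ p| * |V p| :=
    (hf₂m.sub hg₂m).abs.mul hVmeas.abs
  have hAint : Integrable (fun p => |f₁ p - g₁ p| * |V p|) lam := by
    apply Integrable.mono' ((hf₁int.abs.add hg₁int.abs).const_mul CB)
      hAmeas.aestronglyMeasurable
    filter_upwards with p
    rw [Real.norm_eq_abs, abs_of_nonneg (mul_nonneg (abs_nonneg _) (abs_nonneg _))]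
    calc |f₁ p - g₁ p| * |V p| ≤ (|f₁ p| + |g₁ p|) * CB :=
          mul_le_mul (abs_sub_le_abs_add_abs' _ _) (hCB p) (abs_nonneg _)
            (by positivity)
      _ = CB * (|f₁ p| + |g₁ p|) := by ring
  have hBint : Integrable (fun p => |f₂ p - g₂ p| * |V p|) lam := by
    apply Integrable.mono' ((hf₂int.abs.add hg₂int.abs).const_mul CB)
      hBmeas.aestronglyMeasurable
    filter_upwards with p
    rw [Real.norm_eq_abs, abs_of_nonneg (mul_nonneg (abs_nonneg _) (abs_nonneg _))]
    calc |f₂ p - g₂ p| * |V p| ≤ (|f₂ p| + |g₂ p|) * CB :=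
          mul_le_mul (abs_sub_le_abs_add_abs' _ _) (hCB p) (abs_nonneg _)
            (by positivity)
      _ = CB * (|f₂ p| + |g₂ p|) := by ring
  have htv : (((ρ - σ).toJordanDecomposition.posPart
        + (ρ - σ).toJordanDecomposition.negPart) univ).toReal = tvNorm (ρ - σ) := by
    rw [tvNorm]
    rfl
  have hR₁ : ∫ p, |f₁ p - g₁ p| * |V p| ∂lam ≤ CV * tvNorm (ρ - σ) := by
    rw [integral_eq_lintegral_of_nonneg_ae
      (Filter.Eventually.of_forall fun p => mul_nonneg (abs_nonneg _) (abs_nonneg _))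
      hAmeas.aestronglyMeasurable]
    have hb := lint_bound_left lam
      ((ρ - σ).toJordanDecomposition.posPart + (ρ - σ).toJordanDecomposition.negPart) μ
      (fun p => f₁ p - g₁ p) V (hf₁m.sub hg₁m) hVmeas CV CB hCB hwdL hVcomp
    refine le_trans (ENNReal.toReal_mono
      (ENNReal.mul_ne_top ENNReal.ofReal_ne_top (measure_ne_top _ _)) hb) ?_
    rw [ENNReal.toReal_mul, ENNReal.toReal_ofReal hCV0, htv]
  have hR₂ : ∫ p, |f₂ p - g₂ p| * |V p| ∂lam ≤ CV * tvNorm (ρ - σ) := by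
    rw [integral_eq_lintegral_of_nonneg_ae
      (Filter.Eventually.of_forall fun p => mul_nonneg (abs_nonneg _) (abs_nonneg _))
      hBmeas.aestronglyMeasurable]
    have hb := lint_bound_right lam
      ((ρ - σ).toJordanDecomposition.posPart + (ρ - σ).toJordanDecomposition.negPart) μ
      (fun p => f₂ p - g₂ p) V (hf₂m.sub hg₂m) hVmeas CV CB hCB hwdR hVcomp'
    refine le_trans (ENNReal.toReal_mono
      (ENNReal.mul_ne_top ENNReal.ofReal_ne_top (measure_ne_top _ _)) hb) ?_
    rw [ENNReal.toReal_mul, ENNReal.toReal_ofReal hCV0, htv]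
  -- pointwise bound for the difference of integrands
  have hpt : ∀ p : (Fin d → ℝ) × (Fin d → ℝ),
      |(ψ p.2 - ψ p.1) * η p * Φ (f₁ p) (f₂ p) (V p)
        - (ψ p.2 - ψ p.1) * η p * Φ (g₁ p) (g₂ p) (V p)|
      ≤ 2 * Cη * LΦ * (|f₁ p - g₁ p| * |V p| + |f₂ p - g₂ p| * |V p|) := by
    intro p
    calc |(ψ p.2 - ψ p.1) * η p * Φ (f₁ p) (f₂ p) (V p)
          - (ψ p.2 - ψ p.1) * η p * Φ (g₁ p) (g₂ p) (V p)|
        = |ψ p.2 - ψ p.1| * |η p|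
            * |Φ (f₁ p) (f₂ p) (V p) - Φ (g₁ p) (g₂ p) (V p)| := by
          rw [show (ψ p.2 - ψ p.1) * η p * Φ (f₁ p) (f₂ p) (V p)
              - (ψ p.2 - ψ p.1) * η p * Φ (g₁ p) (g₂ p) (V p)
            = (ψ p.2 - ψ p.1) * η p
              * (Φ (f₁ p) (f₂ p) (V p) - Φ (g₁ p) (g₂ p) (V p)) by ring,
            abs_mul, abs_mul]
      _ ≤ 2 * Cη * (LΦ * (|f₁ p - g₁ p| + |f₂ p - g₂ p|) * |V p|) := by
          apply mul_le_mul
          · exact mul_le_mul (hψ2 p) (hηbdd p) (abs_nonneg _) (by norm_num)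
          · exact hlip₂ (f₁ p) (f₂ p) (g₁ p) (g₂ p) (V p)
          · exact abs_nonneg _
          · exact mul_nonneg (by norm_num) hCη0
      _ = 2 * Cη * LΦ * (|f₁ p - g₁ p| * |V p| + |f₂ p - g₂ p| * |V p|) := by ring
  -- assemble
  have hsubint : Integrable (fun p => (ψ p.2 - ψ p.1) * η p * Φ (f₁ p) (f₂ p) (V p)
      - (ψ p.2 - ψ p.1) * η p * Φ (g₁ p) (g₂ p) (V p)) lam := hFint.sub hGint
  have hDint : Integrable
      (fun p => 2 * Cη * LΦ * (|f₁ p - g₁ p| * |V p| + |f₂ p - g₂ p| * |V p|)) lam :=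
    (hAint.add hBint).const_mul _
  have step1 : |(1/2) * (∫ p, (ψ p.2 - ψ p.1) * η p * Φ (f₁ p) (f₂ p) (V p) ∂lam)
      - (1/2) * (∫ p, (ψ p.2 - ψ p.1) * η p * Φ (g₁ p) (g₂ p) (V p) ∂lam)|
      = (1/2) * |∫ p, ((ψ p.2 - ψ p.1) * η p * Φ (f₁ p) (f₂ p) (V p)
          - (ψ p.2 - ψ p.1) * η p * Φ (g₁ p) (g₂ p) (V p)) ∂lam| := by
    rw [← mul_sub, abs_mul, ← integral_sub hFint hGint]
    norm_num
  have step2 : |∫ p, ((ψ p.2 - ψ p.1) * η p * Φ (f₁ p) (f₂ p) (V p)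
      - (ψ p.2 - ψ p.1) * η p * Φ (g₁ p) (g₂ p) (V p)) ∂lam|
      ≤ ∫ p, |(ψ p.2 - ψ p.1) * η p * Φ (f₁ p) (f₂ p) (V p)
          - (ψ p.2 - ψ p.1) * η p * Φ (g₁ p) (g₂ p) (V p)| ∂lam := by
    have := norm_integral_le_integral_norm (μ := lam)
      (fun p => (ψ p.2 - ψ p.1) * η p * Φ (f₁ p) (f₂ p) (V p)
        - (ψ p.2 - ψ p.1) * η p * Φ (g₁ p) (g₂ p) (V p))
    simpa [Real.norm_eq_abs] using this
  have step3 : ∫ p, |(ψ p.2 - ψ p.1) * η p * Φ (f₁ p) (f₂ p) (V p)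
      - (ψ p.2 - ψ p.1) * η p * Φ (g₁ p) (g₂ p) (V p)| ∂lam
      ≤ ∫ p, 2 * Cη * LΦ * (|f₁ p - g₁ p| * |V p| + |f₂ p - g₂ p| * |V p|) ∂lam :=
    integral_mono hsubint.abs hDint hpt
  have step4 : ∫ p, 2 * Cη * LΦ * (|f₁ p - g₁ p| * |V p| + |f₂ p - g₂ p| * |V p|) ∂lam
      = 2 * Cη * LΦ * ((∫ p, |f₁ p - g₁ p| * |V p| ∂lam)
        + (∫ p, |f₂ p - g₂ p| * |V p| ∂lam)) := by
    rw [integral_const_mul, integral_add hAint hBint]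
  have hc0 : (0:ℝ) ≤ 2 * Cη * LΦ := mul_nonneg (mul_nonneg (by norm_num) hCη0) hL0
  have step5 : 2 * Cη * LΦ * ((∫ p, |f₁ p - g₁ p| * |V p| ∂lam)
        + (∫ p, |f₂ p - g₂ p| * |V p| ∂lam))
      ≤ 2 * Cη * LΦ * (2 * (CV * tvNorm (ρ - σ))) := by
    apply mul_le_mul_of_nonneg_left _ hc0
    linarith
  calc |(1/2) * (∫ p, (ψ p.2 - ψ p.1) * η p * Φ (f₁ p) (f₂ p) (V p) ∂lam)
      - (1/2) * (∫ p, (ψ p.2 - ψ p.1) * η p * Φ (g₁ p) (g₂ p) (V p) ∂lam)|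
      = (1/2) * |∫ p, ((ψ p.2 - ψ p.1) * η p * Φ (f₁ p) (f₂ p) (V p)
          - (ψ p.2 - ψ p.1) * η p * Φ (g₁ p) (g₂ p) (V p)) ∂lam| := step1
    _ ≤ (1/2) * (2 * Cη * LΦ * (2 * (CV * tvNorm (ρ - σ)))) := by
        apply mul_le_mul_of_nonneg_left _ (by norm_num : (0:ℝ) ≤ 1/2)
        calc |∫ p, ((ψ p.2 - ψ p.1) * η p * Φ (f₁ p) (f₂ p) (V p)
              - (ψ p.2 - ψ p.1) * η p * Φ (g₁ p) (g₂ p) (V p)) ∂lam|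
            ≤ ∫ p, |(ψ p.2 - ψ p.1) * η p * Φ (f₁ p) (f₂ p) (V p)
                - (ψ p.2 - ψ p.1) * η p * Φ (g₁ p) (g₂ p) (V p)| ∂lam := step2
          _ ≤ ∫ p, 2 * Cη * LΦ * (|f₁ p - g₁ p| * |V p| + |f₂ p - g₂ p| * |V p|) ∂lam := step3
          _ = 2 * Cη * LΦ * ((∫ p, |f₁ p - g₁ p| * |V p| ∂lam)
              + (∫ p, |f₂ p - g₂ p| * |V p| ∂lam)) := step4
          _ ≤ 2 * Cη * LΦ * (2 * (CV * tvNorm (ρ - σ))) := step5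
    _ = 2 * LΦ * Cη * CV * tvNorm (ρ - σ) := by ring
end

section
/- Let μ_n, μ be finite nonnegative Borel measures on ℝ^d with μ_n converging weakly-* to μ, let ρ_n be finite signed measures with uniformly bounded total variation ‖ρ_n‖_{TV} ≤ M converging weakly-* to ρ̄, and let G ∈ C_0(ℝ^d × ℝ^d). Then ∫∫ G(x,y) dρ_n(x) d(μ − μ_n)(y) → 0 as n → ∞. -/
open Set MeasureTheory ZeroAtInfty Filter

/-- Integral of a real function against a finite signed measure, via the Jordan
decomposition. -/
noncomputable def svInt {α : Type*} [MeasurableSpace α] (σ : SignedMeasure α)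
    (f : α → ℝ) : ℝ :=
  (∫ x, f x ∂σ.toJordanDecomposition.posPart) - ∫ x, f x ∂σ.toJordanDecomposition.negPart

/-- The pairing `∫∫ G(x,y) dρ(x) dν(y)` of a `C₀` kernel against the product of a finite
signed measure `ρ` (via its Jordan decomposition) and a finite measure `ν`. -/
noncomputable def prodPairing {d : ℕ} (G : (Fin d → ℝ) × (Fin d → ℝ) → ℝ)
    (ρ : SignedMeasure (Fin d → ℝ)) (ν : Measure (Fin d → ℝ)) : ℝ :=
  (∫ p, G p ∂(ρ.toJordanDecomposition.posPart.prod ν))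
    - ∫ p, G p ∂(ρ.toJordanDecomposition.negPart.prod ν)


variable {d : ℕ}


lemma c0_integrable (ν : Measure (Fin d → ℝ)) [IsFiniteMeasure ν] (f : C₀((Fin d → ℝ), ℝ)) :
    Integrable ⇑f ν := f.toBCF.integrable ν

lemma c0_norm_apply_le (f : C₀((Fin d → ℝ), ℝ)) (x : Fin d → ℝ) : ‖f x‖ ≤ ‖f‖ := by
  rw [← ZeroAtInftyContinuousMap.norm_toBCF_eq_norm]
  exact f.toBCF.norm_coe_le_norm x

lemma c0_norm_le {C : ℝ} (h0 : 0 ≤ C) (f : C₀((Fin d → ℝ), ℝ)) (h : ∀ x, ‖f x‖ ≤ C) :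
    ‖f‖ ≤ C := by
  rw [← ZeroAtInftyContinuousMap.norm_toBCF_eq_norm]
  exact (BoundedContinuousFunction.norm_le h0).mpr h

noncomputable def intC0 (ν : Measure (Fin d → ℝ)) [IsFiniteMeasure ν] :
    C₀((Fin d → ℝ), ℝ) →L[ℝ] ℝ :=
  LinearMap.mkContinuous
    { toFun := fun f => ∫ x, f x ∂ν
      map_add' := fun f g => by
        simp only [ZeroAtInftyContinuousMap.coe_add, Pi.add_apply]
        exact integral_add (c0_integrable ν f) (c0_integrable ν g)
      map_smul' := fun c f => by
        simp only [ZeroAtInftyContinuousMap.coe_smul, Pi.smul_apply, RingHom.id_apply,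
          smul_eq_mul]
        exact integral_smul c _ }
    ((ν univ).toReal)
    (fun f => by
      simpa [mul_comm, Measure.real] using
        norm_integral_le_of_norm_le_const (C := ‖f‖) (μ := ν)
          (Filter.Eventually.of_forall fun x => c0_norm_apply_le f x))

@[simp] lemma intC0_apply (ν : Measure (Fin d → ℝ)) [IsFiniteMeasure ν]
    (f : C₀((Fin d → ℝ), ℝ)) : intC0 ν f = ∫ x, f x ∂ν := rfl

lemma tvNorm_nonneg {α : Type*} [MeasurableSpace α] (σ : SignedMeasure α) : 0 ≤ tvNorm σ :=
  ENNReal.toReal_nonneg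

lemma tvNorm_eq {α : Type*} [MeasurableSpace α] (σ : SignedMeasure α) :
    tvNorm σ = (σ.toJordanDecomposition.posPart univ).toReal
      + (σ.toJordanDecomposition.negPart univ).toReal := by
  rw [tvNorm, MeasureTheory.SignedMeasure.totalVariation, Measure.add_apply,
    ENNReal.toReal_add (measure_ne_top _ _) (measure_ne_top _ _)]

lemma svInt_abs_le (σ : SignedMeasure (Fin d → ℝ)) (f : C₀((Fin d → ℝ), ℝ)) :
    ‖svInt σ ⇑f‖ ≤ tvNorm σ * ‖f‖ := by
  have h1 := norm_integral_le_of_norm_le_const (C := ‖f‖) (μ := σ.toJordanDecomposition.posPart)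
    (Filter.Eventually.of_forall fun x => c0_norm_apply_le f x)
  have h2 := norm_integral_le_of_norm_le_const (C := ‖f‖) (μ := σ.toJordanDecomposition.negPart)
    (Filter.Eventually.of_forall fun x => c0_norm_apply_le f x)
  rw [svInt]
  calc ‖(∫ x, f x ∂σ.toJordanDecomposition.posPart) - ∫ x, f x ∂σ.toJordanDecomposition.negPart‖
      ≤ ‖∫ x, f x ∂σ.toJordanDecomposition.posPart‖
        + ‖∫ x, f x ∂σ.toJordanDecomposition.negPart‖ := norm_sub_le _ _
    _ ≤ ‖f‖ * (σ.toJordanDecomposition.posPart univ).toReal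
        + ‖f‖ * (σ.toJordanDecomposition.negPart univ).toReal := add_le_add h1 h2
    _ = tvNorm σ * ‖f‖ := by rw [tvNorm_eq]; ring

noncomputable def svCLM (σ : SignedMeasure (Fin d → ℝ)) : C₀((Fin d → ℝ), ℝ) →L[ℝ] ℝ :=
  intC0 σ.toJordanDecomposition.posPart - intC0 σ.toJordanDecomposition.negPart

@[simp] lemma svCLM_apply (σ : SignedMeasure (Fin d → ℝ)) (f : C₀((Fin d → ℝ), ℝ)) :
    svCLM σ f = svInt σ ⇑f := rfl

lemma svCLM_norm_le (σ : SignedMeasure (Fin d → ℝ)) (f : C₀((Fin d → ℝ), ℝ)) :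
    ‖svCLM σ f‖ ≤ tvNorm σ * ‖f‖ := by
  rw [svCLM_apply]; exact svInt_abs_le σ f


lemma c0_norm_le' {C : ℝ} (h0 : 0 ≤ C) (f : C₀((Fin d → ℝ), ℝ)) (h : ∀ x, ‖f x‖ ≤ C) :
    ‖f‖ ≤ C := by
  rw [← ZeroAtInftyContinuousMap.norm_toBCF_eq_norm]
  exact (BoundedContinuousFunction.norm_le h0).mpr h

noncomputable def fiber (G : C₀((Fin d → ℝ) × (Fin d → ℝ), ℝ)) (y : Fin d → ℝ) :
    C₀((Fin d → ℝ), ℝ) where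
  toFun := fun x => G (x, y)
  continuous_toFun := G.continuous.comp (continuous_id.prodMk continuous_const)
  zero_at_infty' := by
    have hiso : Isometry (fun x : Fin d → ℝ => (x, y)) := by
      intro a b
      simp [Prod.edist_eq]
    exact (zero_at_infty G).comp hiso.isClosedEmbedding.tendsto_cocompact

@[simp] lemma fiber_apply (G : C₀((Fin d → ℝ) × (Fin d → ℝ), ℝ)) (y x : Fin d → ℝ) :
    fiber G y x = G (x, y) := rfl

noncomputable def flipC0 (G : C₀((Fin d → ℝ) × (Fin d → ℝ), ℝ)) :
    C₀((Fin d → ℝ), C₀((Fin d → ℝ), ℝ)) where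
  toFun := fiber G
  continuous_toFun := by
    rw [Metric.continuous_iff]
    intro y ε hε
    obtain ⟨δ, hδ, hδ'⟩ := Metric.uniformContinuous_iff.mp
      (ZeroAtInftyContinuousMap.uniformContinuous G) (ε / 2) (half_pos hε)
    refine ⟨δ, hδ, fun y' hy' => ?_⟩
    have hle : dist (fiber G y') (fiber G y) ≤ ε / 2 := by
      rw [← ZeroAtInftyContinuousMap.dist_toBCF_eq_dist]
      refine (BoundedContinuousFunction.dist_le (le_of_lt (half_pos hε))).mpr fun x => ?_
      have : dist ((x, y') : (Fin d → ℝ) × (Fin d → ℝ)) (x, y) < δ := by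
        rw [Prod.dist_eq]
        simpa [dist_self] using max_lt hδ hy'
      exact le_of_lt (hδ' this)
    linarith
  zero_at_infty' := by
    rw [Metric.tendsto_nhds]
    intro ε hε
    have := Metric.tendsto_nhds.mp (zero_at_infty G) (ε / 2) (half_pos hε)
    obtain ⟨K, hK, hKsub⟩ := Filter.hasBasis_cocompact.eventually_iff.mp this
    have hK2 : IsCompact (Prod.snd '' K) := hK.image continuous_snd
    filter_upwards [hK2.compl_mem_cocompact] with y hy
    have hbound : ∀ x, ‖fiber G y x‖ ≤ ε / 2 := by
      intro x
      have hxy : (x, y) ∈ Kᶜ := fun hmem => hy ⟨(x, y), hmem, rfl⟩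
      have := hKsub hxy
      simpa [Real.norm_eq_abs, Real.dist_eq] using le_of_lt this
    have : ‖fiber G y‖ ≤ ε / 2 := c0_norm_le' (le_of_lt (half_pos hε)) _ hbound
    rw [dist_zero_right]
    linarith

@[simp] lemma flipC0_apply (G : C₀((Fin d → ℝ) × (Fin d → ℝ), ℝ)) (y : Fin d → ℝ) :
    flipC0 G y = fiber G y := rfl

lemma totallyBounded_range_flip (G : C₀((Fin d → ℝ) × (Fin d → ℝ), ℝ)) :
    TotallyBounded (range (flipC0 G)) := by
  rw [Metric.totallyBounded_iff]
  intro ε hε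
  have := Metric.tendsto_nhds.mp (zero_at_infty (flipC0 G)) ε hε
  obtain ⟨K, hK, hKsub⟩ := Filter.hasBasis_cocompact.eventually_iff.mp this
  have himg : IsCompact (flipC0 G '' K) := hK.image (flipC0 G).continuous
  obtain ⟨t, htfin, htsub⟩ := Metric.totallyBounded_iff.mp himg.totallyBounded ε hε
  refine ⟨t ∪ {0}, htfin.union (finite_singleton 0), ?_⟩
  rintro f ⟨y, rfl⟩
  by_cases hy : y ∈ K
  · have := htsub ⟨y, hy, rfl⟩
    simp only [mem_iUnion, exists_prop] at this ⊢
    obtain ⟨c, hc, hcball⟩ := this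
    exact ⟨c, Or.inl hc, hcball⟩
  · have := hKsub hy
    simp only [mem_iUnion, exists_prop]
    exact ⟨0, Or.inr rfl, by simpa [dist_zero_right] using this⟩


noncomputable def clmCompC0 {E F : Type*} [NormedAddCommGroup E] [NormedSpace ℝ E]
    [NormedAddCommGroup F] [NormedSpace ℝ F] (T : E →L[ℝ] F)
    (f : C₀((Fin d → ℝ), E)) : C₀((Fin d → ℝ), F) where
  toFun := fun y => T (f y)
  continuous_toFun := T.continuous.comp f.continuous
  zero_at_infty' := by
    have h := (T.continuous.tendsto 0).comp (zero_at_infty f)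
    rw [map_zero] at h
    exact h

@[simp] lemma clmCompC0_apply {E F : Type*} [NormedAddCommGroup E] [NormedSpace ℝ E]
    [NormedAddCommGroup F] [NormedSpace ℝ F] (T : E →L[ℝ] F)
    (f : C₀((Fin d → ℝ), E)) (y : Fin d → ℝ) : clmCompC0 T f y = T (f y) := rfl

lemma prodPairing_eq (G : C₀((Fin d → ℝ) × (Fin d → ℝ), ℝ)) (σ : SignedMeasure (Fin d → ℝ))
    (ν : Measure (Fin d → ℝ)) [IsFiniteMeasure ν] :
    prodPairing ⇑G σ ν = ∫ y, clmCompC0 (svCLM σ) (flipC0 G) y ∂ν := by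
  have hpos : Integrable ⇑G (σ.toJordanDecomposition.posPart.prod ν) := G.toBCF.integrable _
  have hneg : Integrable ⇑G (σ.toJordanDecomposition.negPart.prod ν) := G.toBCF.integrable _
  have i1 : Integrable (fun y => ∫ x, G (x, y) ∂σ.toJordanDecomposition.posPart) ν :=
    c0_integrable ν (clmCompC0 (intC0 σ.toJordanDecomposition.posPart) (flipC0 G))
  have i2 : Integrable (fun y => ∫ x, G (x, y) ∂σ.toJordanDecomposition.negPart) ν :=
    c0_integrable ν (clmCompC0 (intC0 σ.toJordanDecomposition.negPart) (flipC0 G))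
  rw [prodPairing, integral_prod_symm _ hpos, integral_prod_symm _ hneg,
    ← integral_sub i1 i2]
  rfl


noncomputable def cutoff (R : ℝ) : C₀((Fin d → ℝ), ℝ) where
  toFun := fun x => max 0 (min 1 (R + 1 - ‖x‖))
  continuous_toFun := by fun_prop
  zero_at_infty' := by
    refine Filter.Tendsto.congr' ?_ tendsto_const_nhds
    filter_upwards [(isCompact_closedBall (0 : Fin d → ℝ) (R + 1)).compl_mem_cocompact]
      with x hx
    have hxn : R + 1 < ‖x‖ := by
      simpa [Metric.mem_closedBall, dist_zero_right] using hx
    have h1 : R + 1 - ‖x‖ ≤ 0 := by linarith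
    exact (max_eq_left ((min_le_right _ _).trans h1)).symm

lemma cutoff_nonneg (R : ℝ) (x : Fin d → ℝ) : 0 ≤ cutoff R x := le_max_left _ _

lemma cutoff_le_one (R : ℝ) (x : Fin d → ℝ) : cutoff R x ≤ 1 :=
  max_le zero_le_one ((min_le_left _ _))

lemma cutoff_eq_one {R : ℝ} {x : Fin d → ℝ} (hx : ‖x‖ ≤ R) : cutoff R x = 1 := by
  have h1 : (1 : ℝ) ≤ R + 1 - ‖x‖ := by linarith
  show max 0 (min 1 (R + 1 - ‖x‖)) = 1
  rw [min_eq_left h1, max_eq_right zero_le_one]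

lemma mass_bound (μ : Measure (Fin d → ℝ)) [IsFiniteMeasure μ]
    (μn : ℕ → Measure (Fin d → ℝ)) (hμnfin : ∀ n, IsFiniteMeasure (μn n))
    (hμconv : ∀ f : C₀((Fin d → ℝ), ℝ),
      Tendsto (fun n => ∫ x, f x ∂(μn n)) atTop (nhds (∫ x, f x ∂μ))) :
    ∃ B : ℝ, 0 ≤ B ∧ ∀ n, ((μn n) univ).toReal ≤ B := by
  set g : ℕ → (C₀((Fin d → ℝ), ℝ) →L[ℝ] ℝ) := fun n => @intC0 d (μn n) (hμnfin n) with hg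
  have hpt : ∀ f, ∃ C, ∀ n, ‖g n f‖ ≤ C := by
    intro f
    have ht : Tendsto (fun n => ‖∫ x, f x ∂(μn n)‖) atTop (nhds ‖∫ x, f x ∂μ‖) :=
      (hμconv f).norm
    obtain ⟨C, hC⟩ := ht.bddAbove_range
    exact ⟨C, fun n => hC ⟨n, rfl⟩⟩
  obtain ⟨C', hC'⟩ := banach_steinhaus hpt
  refine ⟨max C' 0, le_max_right _ _, fun n => ?_⟩
  haveI := hμnfin n
  have hball : ∀ R : ℕ, ((μn n) (Metric.closedBall 0 R)).toReal ≤ max C' 0 := by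
    intro R
    have h1 : ((μn n) (Metric.closedBall 0 R)).toReal
        = ∫ x, (Metric.closedBall (0 : Fin d → ℝ) (R : ℝ)).indicator 1 x ∂(μn n) :=
      (integral_indicator_one measurableSet_closedBall).symm
    have h2 : ∫ x, (Metric.closedBall (0 : Fin d → ℝ) (R : ℝ)).indicator 1 x ∂(μn n)
        ≤ ∫ x, cutoff (R : ℝ) x ∂(μn n) := by
      refine integral_mono ((integrable_const (1 : ℝ)).indicator
        measurableSet_closedBall) (c0_integrable _ _) fun x => ?_
      by_cases hx : x ∈ Metric.closedBall (0 : Fin d → ℝ) (R : ℝ)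
      · rw [indicator_of_mem hx]
        exact le_of_eq (cutoff_eq_one (by simpa [dist_zero_right] using hx)).symm
      · rw [indicator_of_notMem hx]
        exact cutoff_nonneg _ _
    have h3 : ∫ x, cutoff (R : ℝ) x ∂(μn n) ≤ C' := by
      have hnorm : ‖g n (cutoff (R : ℝ))‖ ≤ C' * ‖cutoff (R : ℝ)‖ :=
        le_trans ((g n).le_opNorm _) (by
          have := hC' n
          exact mul_le_mul_of_nonneg_right this (norm_nonneg _))
      have hcut : ‖(cutoff (R : ℝ) : C₀((Fin d → ℝ), ℝ))‖ ≤ 1 := by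
        refine c0_norm_le' zero_le_one _ fun x => ?_
        rw [Real.norm_eq_abs, abs_le]
        exact ⟨by linarith [cutoff_nonneg (R : ℝ) x], cutoff_le_one _ _⟩
      have hC'0 : 0 ≤ C' := le_trans (norm_nonneg _) (hC' n)
      calc ∫ x, cutoff (R : ℝ) x ∂(μn n) ≤ ‖g n (cutoff (R : ℝ))‖ := le_abs_self _
        _ ≤ C' * ‖cutoff (R : ℝ)‖ := hnorm
        _ ≤ C' * 1 := mul_le_mul_of_nonneg_left hcut hC'0
        _ = C' := mul_one _
    calc ((μn n) (Metric.closedBall 0 R)).toReal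
        ≤ C' := by rw [h1]; exact h2.trans h3
      _ ≤ max C' 0 := le_max_left _ _
  have huniv : (μn n) univ ≤ ENNReal.ofReal (max C' 0) := by
    have hunion : ⋃ R : ℕ, Metric.closedBall (0 : Fin d → ℝ) (R : ℝ) = univ := by
      refine eq_univ_of_forall fun x => ?_
      exact mem_iUnion.mpr ⟨⌈‖x‖⌉₊, by
        simpa [dist_zero_right] using Nat.le_ceil ‖x‖⟩
    have hmono : Monotone fun R : ℕ => Metric.closedBall (0 : Fin d → ℝ) (R : ℝ) :=
      fun a b hab => Metric.closedBall_subset_closedBall (by exact_mod_cast hab)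
    have htend := tendsto_measure_iUnion_atTop (μ := μn n) hmono
    rw [hunion] at htend
    refine le_of_tendsto' htend fun R => ?_
    show (μn n) (Metric.closedBall 0 (R : ℝ)) ≤ _
    rw [ENNReal.le_ofReal_iff_toReal_le (measure_ne_top _ _) (le_max_right _ _)]
    exact hball R
  exact ENNReal.toReal_le_of_le_ofReal (le_max_right _ _) huniv

lemma key_unif (M : ℝ) (ρn : ℕ → SignedMeasure (Fin d → ℝ)) (ρbar : SignedMeasure (Fin d → ℝ))
    (hρbdd : ∀ n, tvNorm (ρn n) ≤ M)
    (hρconv : ∀ f : C₀((Fin d → ℝ), ℝ),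
      Tendsto (fun n => svInt (ρn n) ⇑f) atTop (nhds (svInt ρbar ⇑f)))
    (G : C₀((Fin d → ℝ) × (Fin d → ℝ), ℝ)) :
    Tendsto (fun n => ‖clmCompC0 (svCLM (ρn n)) (flipC0 G)
      - clmCompC0 (svCLM ρbar) (flipC0 G)‖) atTop (nhds 0) := by
  rw [Metric.tendsto_atTop]
  intro ε hε
  set K : ℝ := max M 0 + tvNorm ρbar + 1 with hK
  have hK0 : 0 < K := by
    have h1 := tvNorm_nonneg ρbar
    have h2 : (0 : ℝ) ≤ max M 0 := le_max_right _ _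
    linarith
  set δ : ℝ := ε / (4 * K) with hδdef
  have hδ : 0 < δ := by positivity
  obtain ⟨t, htfin, htsub⟩ := Metric.totallyBounded_iff.mp (totallyBounded_range_flip G) δ hδ
  have hev : ∀ᶠ n in atTop, ∀ c ∈ t, |svInt (ρn n) ⇑c - svInt ρbar ⇑c| < ε / 4 := by
    rw [eventually_all_finite htfin]
    intro c _
    have h := Metric.tendsto_nhds.mp (hρconv c) (ε / 4) (by positivity)
    simpa [Real.dist_eq] using h
  obtain ⟨N, hN⟩ := eventually_atTop.mp hev
  refine ⟨N, fun n hn => ?_⟩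
  have hbnd : ‖clmCompC0 (svCLM (ρn n)) (flipC0 G) - clmCompC0 (svCLM ρbar) (flipC0 G)‖
      ≤ ε / 2 := by
    refine c0_norm_le' (by positivity) _ fun y => ?_
    have hmem : flipC0 G y ∈ ⋃ c ∈ t, Metric.ball c δ := htsub ⟨y, rfl⟩
    simp only [mem_iUnion, exists_prop] at hmem
    obtain ⟨c, hct, hcball⟩ := hmem
    have hdist : ‖flipC0 G y - c‖ < δ := by
      rw [← dist_eq_norm]; exact hcball
    have hsplit : (clmCompC0 (svCLM (ρn n)) (flipC0 G)
          - clmCompC0 (svCLM ρbar) (flipC0 G)) y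
        = (svCLM (ρn n) (flipC0 G y - c) - svCLM ρbar (flipC0 G y - c))
          + (svCLM (ρn n) c - svCLM ρbar c) := by
      simp only [ZeroAtInftyContinuousMap.coe_sub, Pi.sub_apply, clmCompC0_apply, map_sub]
      ring
    rw [hsplit]
    have b1 : ‖svCLM (ρn n) (flipC0 G y - c)‖ ≤ (max M 0) * δ := by
      refine le_trans (svCLM_norm_le _ _) ?_
      have h1 : tvNorm (ρn n) ≤ max M 0 := le_trans (hρbdd n) (le_max_left _ _)
      exact mul_le_mul h1 (le_of_lt hdist) (norm_nonneg _) (le_max_right _ _)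
    have b2 : ‖svCLM ρbar (flipC0 G y - c)‖ ≤ tvNorm ρbar * δ := by
      refine le_trans (svCLM_norm_le _ _) ?_
      exact mul_le_mul_of_nonneg_left (le_of_lt hdist) (tvNorm_nonneg _)
    have b3 : ‖svCLM (ρn n) c - svCLM ρbar c‖ < ε / 4 := by
      simpa [svCLM_apply, Real.norm_eq_abs] using hN n hn c hct
    have hKδ : (max M 0) * δ + tvNorm ρbar * δ ≤ ε / 4 := by
      have : (max M 0 + tvNorm ρbar) * δ ≤ K * δ := by
        refine mul_le_mul_of_nonneg_right ?_ (le_of_lt hδ)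
        rw [hK]; linarith
      have hKδeq : K * δ = ε / 4 := by
        rw [hδdef]; field_simp
      nlinarith
    calc ‖(svCLM (ρn n) (flipC0 G y - c) - svCLM ρbar (flipC0 G y - c))
          + (svCLM (ρn n) c - svCLM ρbar c)‖
        ≤ ‖svCLM (ρn n) (flipC0 G y - c) - svCLM ρbar (flipC0 G y - c)‖
          + ‖svCLM (ρn n) c - svCLM ρbar c‖ := norm_add_le _ _
      _ ≤ (‖svCLM (ρn n) (flipC0 G y - c)‖ + ‖svCLM ρbar (flipC0 G y - c)‖)
          + ‖svCLM (ρn n) c - svCLM ρbar c‖ := by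
            gcongr; exact norm_sub_le _ _
      _ ≤ ((max M 0) * δ + tvNorm ρbar * δ) + ε / 4 := by
            have := le_of_lt b3
            gcongr
      _ ≤ ε / 4 + ε / 4 := by linarith
      _ = ε / 2 := by ring
  rw [Real.dist_eq, sub_zero, abs_of_nonneg (norm_nonneg _)]
  linarith

/-- if `μ_n ⇀* μ` (finite nonnegative measures, in duality with `C₀`),
`ρ_n` are finite signed measures with `‖ρ_n‖_TV ≤ M` converging weakly-* to `ρ̄`, and
`G ∈ C₀(ℝ^d × ℝ^d)`, then `∫∫ G(x,y) dρ_n(x) d(μ − μ_n)(y) → 0`. -/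
theorem mixed_product_pairing_tendsto_zero {d : ℕ} (M : ℝ)
    (μ : Measure (Fin d → ℝ)) [IsFiniteMeasure μ]
    (μn : ℕ → Measure (Fin d → ℝ)) (hμnfin : ∀ n, IsFiniteMeasure (μn n))
    (hμconv : ∀ f : C₀((Fin d → ℝ), ℝ),
      Tendsto (fun n => ∫ x, f x ∂(μn n)) atTop (nhds (∫ x, f x ∂μ)))
    (ρn : ℕ → SignedMeasure (Fin d → ℝ)) (ρbar : SignedMeasure (Fin d → ℝ))
    (hρbdd : ∀ n, tvNorm (ρn n) ≤ M)
    (hρconv : ∀ f : C₀((Fin d → ℝ), ℝ),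
      Tendsto (fun n => svInt (ρn n) ⇑f) atTop (nhds (svInt ρbar ⇑f)))
    (G : C₀((Fin d → ℝ) × (Fin d → ℝ), ℝ)) :
    Tendsto (fun n => prodPairing ⇑G (ρn n) μ - prodPairing ⇑G (ρn n) (μn n))
      atTop (nhds 0) := by
  obtain ⟨B, hB0, hBle⟩ := mass_bound μ μn hμnfin hμconv
  set Φ := flipC0 G with hΦ
  set hbar : C₀((Fin d → ℝ), ℝ) := clmCompC0 (svCLM ρbar) Φ with hhbar
  set hn : ℕ → C₀((Fin d → ℝ), ℝ) := fun n => clmCompC0 (svCLM (ρn n)) Φ with hhn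
  have key : Tendsto (fun n => ‖hn n - hbar‖) atTop (nhds 0) :=
    key_unif M ρn ρbar hρbdd hρconv G
  -- Term 1 : ∫ (hn - hbar) dμ → 0
  have T1 : Tendsto (fun n => (∫ y, hn n y ∂μ) - ∫ y, hbar y ∂μ) atTop (nhds 0) := by
    refine squeeze_zero_norm (fun n => ?_) (by simpa using key.mul_const ((μ univ).toReal))
    rw [← integral_sub (c0_integrable μ (hn n)) (c0_integrable μ hbar)]
    refine le_trans (norm_integral_le_of_norm_le_const (C := ‖hn n - hbar‖)
      (Filter.Eventually.of_forall fun y => ?_)) (le_of_eq rfl)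
    have := c0_norm_apply_le (hn n - hbar) y
    simpa [ZeroAtInftyContinuousMap.coe_sub, Pi.sub_apply] using this
  -- Term 2 : ∫ hbar dμ - ∫ hbar dμn → 0
  have T2 : Tendsto (fun n => (∫ y, hbar y ∂μ) - ∫ y, hbar y ∂(μn n)) atTop (nhds 0) := by
    have := (tendsto_const_nhds (x := ∫ y, hbar y ∂μ) (f := atTop (α := ℕ))).sub (hμconv hbar)
    simpa using this
  -- Term 3 : ∫ (hbar - hn) dμn → 0
  have T3 : Tendsto (fun n => (∫ y, hbar y ∂(μn n)) - ∫ y, hn n y ∂(μn n)) atTop (nhds 0) := by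
    refine squeeze_zero_norm (fun n => ?_) (by simpa using key.mul_const B)
    haveI := hμnfin n
    rw [← integral_sub (c0_integrable (μn n) hbar) (c0_integrable (μn n) (hn n))]
    have step : ‖∫ y, (hbar y - hn n y) ∂(μn n)‖
        ≤ ‖hn n - hbar‖ * ((μn n) univ).toReal := by
      refine norm_integral_le_of_norm_le_const (Filter.Eventually.of_forall fun y => ?_)
      have := c0_norm_apply_le (hn n - hbar) y
      rw [ZeroAtInftyContinuousMap.coe_sub] at this
      simpa [Pi.sub_apply, norm_sub_rev] using this
    refine le_trans step ?_
    exact mul_le_mul_of_nonneg_left (hBle n) (norm_nonneg _)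
  have hsum := (T1.add T2).add T3
  simp only [add_zero] at hsum
  refine hsum.congr fun n => ?_
  haveI := hμnfin n
  rw [prodPairing_eq G (ρn n) μ, prodPairing_eq G (ρn n) (μn n)]
  show ((∫ y, hn n y ∂μ) - ∫ y, hbar y ∂μ) + ((∫ y, hbar y ∂μ) - ∫ y, hbar y ∂(μn n))
      + ((∫ y, hbar y ∂(μn n)) - ∫ y, hn n y ∂(μn n))
    = (∫ y, hn n y ∂μ) - ∫ y, hn n y ∂(μn n)
  ring
end
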